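/- The spaces of lifted functions associated to distinct translated fractional ideals are linearly independent: if J_1,…,J_n are pairwise distinct translated fractional ideals, J_i = a_i + t(γ_i)O_F, and f_1,…,f_n ∈ 𝓛 are such that ∑_{i=1}^n f_i^{a_i,γ_i} = 0 as a function on F, then f_i = 0 for every i. -/

import Mathlib

noncomputable section

open MeasureTheory

/-- A field `F` with a split valuation `ν : F^× → Γ` (split by `t`), with residue field `k`,
residue map `ρ : O_F → k`, where `Γ` has a minimal positive element `one`. -/
structure LiftSetup (Γ F k : Type*) [AddCommGroup Γ] [LinearOrder Γ] [IsOrderedAddMonoid Γ] [Field F] [Field k] where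
  /-- the valuation (recorded on nonzero elements) -/
  ν : F → Γ
  /-- the splitting homomorphism `t : Γ → F^×` -/
  t : Γ → F
  /-- the residue map (recorded on the valuation ring) -/
  ρ : F → k
  /-- the minimal positive element of `Γ` -/
  one : Γ
  one_pos : 0 < one
  one_min : ∀ γ : Γ, 0 < γ → one ≤ γ
  ν_mul : ∀ x y : F, x ≠ 0 → y ≠ 0 → ν (x * y) = ν x + ν y
  ν_add : ∀ x y : F, x ≠ 0 → y ≠ 0 → x + y ≠ 0 → min (ν x) (ν y) ≤ ν (x + y)
  t_ne : ∀ γ : Γ, t γ ≠ 0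
  t_add : ∀ γ δ : Γ, t (γ + δ) = t γ * t δ
  ν_t : ∀ γ : Γ, ν (t γ) = γ
  ρ_add : ∀ x y : F, (x = 0 ∨ 0 ≤ ν x) → (y = 0 ∨ 0 ≤ ν y) → ρ (x + y) = ρ x + ρ y
  ρ_mul : ∀ x y : F, (x = 0 ∨ 0 ≤ ν x) → (y = 0 ∨ 0 ≤ ν y) → ρ (x * y) = ρ x * ρ y
  ρ_one : ρ 1 = 1
  ρ_surj : ∀ u : k, ∃ x : F, (x = 0 ∨ 0 ≤ ν x) ∧ ρ x = u
  ρ_eq_zero : ∀ x : F, (x = 0 ∨ 0 ≤ ν x) → (ρ x = 0 ↔ (x = 0 ∨ 0 < ν x))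

namespace LiftSetup

variable {Γ F k : Type*} [AddCommGroup Γ] [LinearOrder Γ] [IsOrderedAddMonoid Γ] [Field F] [Field k]
variable (S : LiftSetup Γ F k)

/-- The ring of integers `O_F` of the valuation. -/
def integers : Set F := {x | x = 0 ∨ 0 ≤ S.ν x}

/-- The translated fractional ideal `a + t(γ)O_F`. -/
def fracIdeal (a : F) (γ : Γ) : Set F := {x | (x - a) * S.t (-γ) ∈ S.integers}

/-- The lift `f^{a,γ}` of a function `f` on the residue field `k`:
`f^{a,γ}(x) = f(ρ((x-a)t(-γ)))` for `x ∈ a + t(γ)O_F` and `0` otherwise. -/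
def lift {A : Type*} [Zero A] (f : k → A) (a : F) (γ : Γ) : F → A :=
  (S.fracIdeal a γ).indicator fun x => f (S.ρ ((x - a) * S.t (-γ)))

/-- The homomorphism `η : F^× → k^×`, `x ↦ ρ(x t(-ν x))`. -/
def η (x : F) : k := S.ρ (x * S.t (-S.ν x))

end LiftSetup

/-!
Among the ideals `J_i` choose one, `J_m`, of maximal height, i.e. a smallest ball. By the
ultrametric inequality any other `J_j` either misses `J_m` or contains it with strictly smaller
height, and in the latter case the residue `ρ((x - a_j) t(-γ_j))` is the same for all `x ∈ J_m`.
So every other summand is constant on `J_m`, hence so is `f_m^{a_m,γ_m}`; as the residue map of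
`J_m` is onto `k`, `f_m` is a constant function in `𝓛`, hence zero. Drop it and induct.
-/

namespace LiftSetup

variable {Γ F k : Type*} [AddCommGroup Γ] [LinearOrder Γ] [IsOrderedAddMonoid Γ] [Field F]
  [Field k] (S : LiftSetup Γ F k)

lemma ν_one : S.ν 1 = 0 := by
  have h := S.ν_mul 1 1 one_ne_zero one_ne_zero
  rw [mul_one] at h
  simpa using h

lemma ν_neg_one : S.ν (-1 : F) = 0 := by
  have h := S.ν_mul (-1) (-1) (by simp) (by simp)
  rw [neg_mul_neg, one_mul, S.ν_one, eq_comm, ← two_nsmul] at h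
  exact (nsmul_eq_zero_iff_right two_ne_zero).mp h

lemma ν_neg {x : F} (hx : x ≠ 0) : S.ν (-x) = S.ν x := by
  simpa [S.ν_neg_one] using S.ν_mul (-1) x (by simp) hx

lemma ν_mul_t_neg {x : F} (hx : x ≠ 0) (γ : Γ) : S.ν (x * S.t (-γ)) = S.ν x - γ := by
  rw [S.ν_mul _ _ hx (S.t_ne _), S.ν_t, sub_eq_add_neg]

lemma t_zero : S.t 0 = 1 :=
  mul_left_cancel₀ (S.t_ne 0) (by rw [← S.t_add, add_zero, mul_one])

lemma t_mul_t_neg (γ : Γ) : S.t γ * S.t (-γ) = 1 := by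
  rw [← S.t_add, add_neg_cancel, S.t_zero]

lemma mem_fracIdeal_iff {x a : F} {γ : Γ} :
    x ∈ S.fracIdeal a γ ↔ x = a ∨ γ ≤ S.ν (x - a) := by
  by_cases hxa : x = a
  · simp [hxa, fracIdeal, integers]
  · have hsub : x - a ≠ 0 := sub_ne_zero.mpr hxa
    simp [fracIdeal, integers, hxa, hsub, S.t_ne, S.ν_mul_t_neg hsub]

lemma mem_fracIdeal_comm {x a : F} {γ : Γ} : x ∈ S.fracIdeal a γ ↔ a ∈ S.fracIdeal x γ := by
  suffices ∀ x a : F, x ∈ S.fracIdeal a γ → a ∈ S.fracIdeal x γ from ⟨this x a, this a x⟩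
  intro x a h
  rw [S.mem_fracIdeal_iff] at h ⊢
  rcases eq_or_ne x a with rfl | hxa
  · exact Or.inl rfl
  · rw [← neg_sub, S.ν_neg (sub_ne_zero.mpr hxa)]
    exact Or.inr (h.resolve_left hxa)

lemma mem_fracIdeal_trans {x y a : F} {γ : Γ} (hxy : x ∈ S.fracIdeal y γ)
    (hya : y ∈ S.fracIdeal a γ) : x ∈ S.fracIdeal a γ := by
  rw [S.mem_fracIdeal_iff] at hxy hya ⊢
  rcases eq_or_ne x y with rfl | hxy'
  · exact hya
  rcases eq_or_ne y a with rfl | hya'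
  · exact hxy
  rcases eq_or_ne x a with hxa | hxa
  · exact Or.inl hxa
  have hsum := S.ν_add (x - y) (y - a) (sub_ne_zero.mpr hxy') (sub_ne_zero.mpr hya')
    (by simpa using sub_ne_zero.mpr hxa)
  rw [sub_add_sub_cancel] at hsum
  exact Or.inr ((le_min (hxy.resolve_left hxy') (hya.resolve_left hya')).trans hsum)

lemma fracIdeal_eq_of_mem {x a : F} {γ : Γ} (h : x ∈ S.fracIdeal a γ) :
    S.fracIdeal a γ = S.fracIdeal x γ := by
  ext y
  exact ⟨fun hy => S.mem_fracIdeal_trans hy (S.mem_fracIdeal_comm.mp h),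
    fun hy => S.mem_fracIdeal_trans hy h⟩

lemma fracIdeal_anti (a : F) {γ δ : Γ} (h : δ ≤ γ) : S.fracIdeal a γ ⊆ S.fracIdeal a δ := by
  intro x hx
  rw [S.mem_fracIdeal_iff] at hx ⊢
  exact hx.imp_right h.trans

lemma fracIdeal_subset_of_mem_of_mem {x a b : F} {γ δ : Γ} (hxa : x ∈ S.fracIdeal a γ)
    (hxb : x ∈ S.fracIdeal b δ) (h : δ ≤ γ) : S.fracIdeal a γ ⊆ S.fracIdeal b δ := by
  rw [S.fracIdeal_eq_of_mem hxa, S.fracIdeal_eq_of_mem hxb]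
  exact S.fracIdeal_anti x h

lemma residue_eq_of_mem {x y a : F} {γ δ : Γ} (hx : x ∈ S.fracIdeal a γ)
    (hy : y ∈ S.fracIdeal x δ) (hγδ : γ < δ) :
    S.ρ ((y - a) * S.t (-γ)) = S.ρ ((x - a) * S.t (-γ)) := by
  rcases eq_or_ne y x with rfl | hyx
  · rfl
  have hyx' : y - x ≠ 0 := sub_ne_zero.mpr hyx
  have hpos : 0 < S.ν ((y - x) * S.t (-γ)) := by
    rw [S.ν_mul_t_neg hyx', sub_pos]
    exact hγδ.trans_le ((S.mem_fracIdeal_iff.mp hy).resolve_left hyx)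
  have hint : (y - x) * S.t (-γ) ∈ S.integers := Or.inr hpos.le
  rw [show (y - a) * S.t (-γ) = (x - a) * S.t (-γ) + (y - x) * S.t (-γ) by ring,
    S.ρ_add _ _ hx hint, (S.ρ_eq_zero _ hint).mpr (Or.inr hpos), add_zero]

lemma exists_mem_fracIdeal_residue_eq (a : F) (γ : Γ) (u : k) :
    ∃ x ∈ S.fracIdeal a γ, S.ρ ((x - a) * S.t (-γ)) = u := by
  obtain ⟨w, hw, rfl⟩ := S.ρ_surj u
  have hx : (a + S.t γ * w - a) * S.t (-γ) = w := by
    rw [add_sub_cancel_left, mul_comm, ← mul_assoc, mul_comm _ (S.t γ), S.t_mul_t_neg, one_mul]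
  exact ⟨a + S.t γ * w, show _ ∈ S.integers by rw [hx]; exact hw, by rw [hx]⟩

variable {A : Type*}

section Zero

variable [Zero A]

lemma lift_apply_of_mem (f : k → A) {x a : F} {γ : Γ} (h : x ∈ S.fracIdeal a γ) :
    S.lift f a γ x = f (S.ρ ((x - a) * S.t (-γ))) :=
  Set.indicator_of_mem h _

lemma lift_apply_of_notMem (f : k → A) {x a : F} {γ : Γ} (h : x ∉ S.fracIdeal a γ) :
    S.lift f a γ x = 0 :=
  Set.indicator_of_notMem h _

@[simp]
lemma lift_zero (a : F) (γ : Γ) : S.lift (0 : k → A) a γ = 0 :=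
  Set.indicator_zero' _

lemma lift_apply_eq_of_mem_fracIdeal_of_le_of_ne (f : k → A) {a b : F} {γ δ : Γ} (hγδ : γ ≤ δ)
    (hne : S.fracIdeal a γ ≠ S.fracIdeal b δ) {x y : F} (hx : x ∈ S.fracIdeal b δ)
    (hy : y ∈ S.fracIdeal b δ) : S.lift f a γ y = S.lift f a γ x := by
  by_cases hxa : x ∈ S.fracIdeal a γ
  · have hsub := S.fracIdeal_subset_of_mem_of_mem hx hxa hγδ
    have hlt : γ < δ := hγδ.lt_of_ne fun h => hne <| by
      rw [S.fracIdeal_eq_of_mem hxa, S.fracIdeal_eq_of_mem hx, h]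
    rw [S.lift_apply_of_mem f hxa, S.lift_apply_of_mem f (hsub hy),
      S.residue_eq_of_mem hxa (S.fracIdeal_eq_of_mem hx ▸ hy) hlt]
  · have hya : y ∉ S.fracIdeal a γ := fun hya =>
      hxa (S.fracIdeal_subset_of_mem_of_mem hy hya hγδ hx)
    rw [S.lift_apply_of_notMem f hxa, S.lift_apply_of_notMem f hya]

lemma apply_eq_of_lift_apply_eq {f : k → A} {a : F} {γ : Γ}
    (h : ∀ x ∈ S.fracIdeal a γ, ∀ y ∈ S.fracIdeal a γ, S.lift f a γ x = S.lift f a γ y)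
    (u v : k) : f u = f v := by
  obtain ⟨x, hx, rfl⟩ := S.exists_mem_fracIdeal_residue_eq a γ u
  obtain ⟨y, hy, rfl⟩ := S.exists_mem_fracIdeal_residue_eq a γ v
  rw [← S.lift_apply_of_mem f hx, ← S.lift_apply_of_mem f hy]
  exact h x hx y hy

end Zero

theorem eq_zero_of_sum_lift_eq_zero [AddCommGroup A] {ι : Type*} [DecidableEq ι] (a : ι → F)
    (γ : ι → Γ) (f : ι → k → A) (hconst : ∀ i (c : A), (f i = fun _ => c) → c = 0)
    (hdistinct : ∀ i j, i ≠ j → S.fracIdeal (a i) (γ i) ≠ S.fracIdeal (a j) (γ j))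
    (s : Finset ι) : ∑ i ∈ s, S.lift (f i) (a i) (γ i) = 0 → ∀ i ∈ s, f i = 0 := by
  induction s using Finset.induction_on_max_value γ with
  | empty => simp
  | insert m s hms hmax ih =>
    intro hsum
    rw [Finset.sum_insert hms] at hsum
    have hfm : f m = 0 := by
      have hlift : ∀ x ∈ S.fracIdeal (a m) (γ m), ∀ y ∈ S.fracIdeal (a m) (γ m),
          S.lift (f m) (a m) (γ m) x = S.lift (f m) (a m) (γ m) y := by
        intro x hx y hy
        have hrest :
            ∑ j ∈ s, S.lift (f j) (a j) (γ j) y = ∑ j ∈ s, S.lift (f j) (a j) (γ j) x :=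
          Finset.sum_congr rfl fun j hj => S.lift_apply_eq_of_mem_fracIdeal_of_le_of_ne (f j)
            (hmax j hj) (hdistinct j m (ne_of_mem_of_not_mem hj hms)) hx hy
        have hx0 := congrFun hsum x
        have hy0 := congrFun hsum y
        simp only [Pi.add_apply, Finset.sum_apply, Pi.zero_apply] at hx0 hy0
        rw [hrest] at hy0
        exact add_right_cancel (hx0.trans hy0.symm)
      have hfc : f m = fun _ => f m 0 := funext fun u => S.apply_eq_of_lift_apply_eq hlift u 0
      rw [hfc, hconst m _ hfc]
      rfl
    rw [hfm, lift_zero, zero_add] at hsum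
    intro i hi
    rcases Finset.mem_insert.mp hi with rfl | hi
    exacts [hfm, ih hsum i hi]

end LiftSetup

theorem statement0_general
    {Γ F k : Type*} [AddCommGroup Γ] [LinearOrder Γ] [IsOrderedAddMonoid Γ] [Field F] [Field k]
    (S : LiftSetup Γ F k)
    (𝓛 : Submodule ℂ (k → ℂ))
    (h𝓛const : ∀ c : ℂ, (fun _ : k => c) ∈ 𝓛 → c = 0)
    (n : ℕ) (a : Fin n → F) (γ : Fin n → Γ) (f : Fin n → (k → ℂ))
    (hf : ∀ i, f i ∈ 𝓛)
    (hdistinct : ∀ i j, i ≠ j → S.fracIdeal (a i) (γ i) ≠ S.fracIdeal (a j) (γ j))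
    (hsum : ∑ i, S.lift (f i) (a i) (γ i) = 0) :
    ∀ i, f i = 0 := fun i =>
  S.eq_zero_of_sum_lift_eq_zero a γ f (fun i c hc => h𝓛const c (hc ▸ hf i)) hdistinct
    Finset.univ hsum i (Finset.mem_univ i)

/-- The spaces of lifted functions associated to distinct translated
fractional ideals are linearly independent: if `J₁, …, Jₙ` are pairwise distinct translated
fractional ideals, `Jᵢ = aᵢ + t(γᵢ)O_F`, and `f₁, …, fₙ ∈ 𝓛` satisfy
`∑ i, fᵢ^{aᵢ,γᵢ} = 0` as a function on `F`, then every `fᵢ = 0`.  Here `𝓛` is a complex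
space of complex-valued functions on the residue field `k`, closed under translation and
containing no nonzero constant function. -/
theorem statement0
    {Γ F k : Type*} [AddCommGroup Γ] [LinearOrder Γ] [IsOrderedAddMonoid Γ] [Field F] [Field k]
    (S : LiftSetup Γ F k)
    (𝓛 : Submodule ℂ (k → ℂ))
    (h𝓛trans : ∀ f ∈ 𝓛, ∀ c : k, (fun u => f (u + c)) ∈ 𝓛)
    (h𝓛const : ∀ c : ℂ, (fun _ : k => c) ∈ 𝓛 → c = 0)
    (n : ℕ) (a : Fin n → F) (γ : Fin n → Γ) (f : Fin n → (k → ℂ))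
    (hf : ∀ i, f i ∈ 𝓛)
    (hdistinct : ∀ i j, i ≠ j → S.fracIdeal (a i) (γ i) ≠ S.fracIdeal (a j) (γ j))
    (hsum : ∑ i, S.lift (f i) (a i) (γ i) = 0) :
    ∀ i, f i = 0 :=
  statement0_general S 𝓛 h𝓛const n a γ f hf hdistinct hsum
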